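/- In a Hoare-synchronized transition of a structured amoeboid where each node of the graph is shared by at most two edges and every applicable auxiliary production exposes non-trivial actions on exactly two nodes of the rewritten edge, the set of synchronizing edges decomposes into maximal chains, and each such chain either has both endpoints at external nodes or forms a cycle consisting entirely of internal nodes; moreover exactly one chain of the first kind exists whenever the overall transition exposes non-ε actions on exactly two external nodes. -/

import Mathlib

/-! A vertex of degree one has odd degree, so by the handshake lemma applied to its connected
component the component contains a second vertex of odd degree; when all degrees are at most two
that vertex also has degree one. Hence a component containing an edge either has two distinct
vertices of degree one, which must be external, or is `2`-regular, so that all its nodes are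
internal. If exactly two external nodes have degree one, the second degree-one vertex in the
component of either of them is the other, so both lie in the same component. -/

namespace SimpleGraph.ConnectedComponent

variable {V : Type*} {G : SimpleGraph V} [Fintype V] [DecidableRel G.Adj]

lemma degree_pos_of_mem {C : G.ConnectedComponent} {u v : V} (hu : u ∈ C) (hv : v ∈ C)
    (hpos : 0 < G.degree v) : 0 < G.degree u := by
  rcases eq_or_ne u v with rfl | huv
  · exact hpos
  · exact (G.degree_pos_iff_mem_support u).mpr
      (mem_support_of_reachable huv (C.reachable_of_mem_supp hu hv))

lemma exists_ne_odd_degree_of_odd_degree {C : G.ConnectedComponent} {v : V} (hv : v ∈ C)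
    (hodd : Odd (G.degree v)) : ∃ w ∈ C, w ≠ v ∧ Odd (G.degree w) := by
  classical
  have hdeg (u : C.supp) : (G.induce C.supp).degree u = G.degree u :=
    degree_induce_of_neighborSet_subset fun _ hw => C.mem_supp_of_adj_mem_supp u.2 hw
  obtain ⟨w, hwv, hw⟩ :=
    (G.induce C.supp).exists_ne_odd_degree_of_exists_odd_degree ⟨v, hv⟩ (by rwa [hdeg])
  exact ⟨w, w.2, fun h => hwv (Subtype.ext h), by rwa [hdeg] at hw⟩

variable (hmax : ∀ v, G.degree v ≤ 2)
include hmax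

lemma exists_ne_degree_eq_one {C : G.ConnectedComponent} {v : V} (hv : v ∈ C)
    (hdeg : G.degree v = 1) : ∃ w ∈ C, w ≠ v ∧ G.degree w = 1 := by
  obtain ⟨w, hw, hwv, hodd⟩ := exists_ne_odd_degree_of_odd_degree hv (hdeg ▸ odd_one)
  have := hmax w
  refine ⟨w, hw, hwv, ?_⟩
  rcases hodd with ⟨k, hk⟩
  omega

lemma exists_degree_eq_one_pair_or_degree_eq_two (C : G.ConnectedComponent)
    (hC : ∃ v ∈ C, 0 < G.degree v) :
    (∃ v ∈ C, ∃ w ∈ C, v ≠ w ∧ G.degree v = 1 ∧ G.degree w = 1) ∨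
      ∀ v ∈ C, G.degree v = 2 := by
  obtain ⟨v₀, hv₀, hpos⟩ := hC
  by_cases hleaf : ∃ v ∈ C, G.degree v = 1
  · obtain ⟨v, hv, hdeg⟩ := hleaf
    obtain ⟨w, hw, hwv, hwdeg⟩ := exists_ne_degree_eq_one hmax hv hdeg
    exact Or.inl ⟨v, hv, w, hw, hwv.symm, hdeg, hwdeg⟩
  · push Not at hleaf
    refine Or.inr fun v hv => ?_
    have := degree_pos_of_mem hv hv₀ hpos
    have := hmax v
    have := hleaf v hv
    omega

end SimpleGraph.ConnectedComponent

open SimpleGraph.ConnectedComponent in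
theorem amoeboid_synchronization_decomposition_general {V : Type*} [Fintype V]
    (G : SimpleGraph V) [DecidableRel G.Adj]
    (ext int : Set V)
    (hpart : ∀ v, v ∈ ext ↔ v ∉ int)
    (hdeg_ext : ∀ v ∈ ext, G.degree v ≤ 1)
    (hdeg_int : ∀ v ∈ int, G.degree v = 0 ∨ G.degree v = 2) :
    (∀ C : G.ConnectedComponent,
      (∃ v, G.connectedComponentMk v = C ∧ 0 < G.degree v) →
        ((∃ v w, v ≠ w ∧ v ∈ ext ∧ w ∈ ext ∧
            G.connectedComponentMk v = C ∧ G.connectedComponentMk w = C ∧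
            G.degree v = 1 ∧ G.degree w = 1) ∨
         (∀ v, G.connectedComponentMk v = C → v ∈ int ∧ G.degree v = 2))) ∧
    ((ext ∩ {v | G.degree v = 1}).ncard = 2 →
      ∃! C : G.ConnectedComponent,
        ∃ v, v ∈ ext ∧ G.degree v = 1 ∧ G.connectedComponentMk v = C) := by
  have hcases (v : V) :
      v ∈ ext ∧ G.degree v ≤ 1 ∨ v ∈ int ∧ (G.degree v = 0 ∨ G.degree v = 2) := by
    by_cases hv : v ∈ ext
    · exact Or.inl ⟨hv, hdeg_ext v hv⟩
    · have hv' : v ∈ int := not_not.mp fun h => hv ((hpart v).mpr h)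
      exact Or.inr ⟨hv', hdeg_int v hv'⟩
  have hmax (v : V) : G.degree v ≤ 2 := by
    rcases hcases v with ⟨-, h⟩ | ⟨-, h | h⟩ <;> omega
  have hext (v : V) (hv : G.degree v = 1) : v ∈ ext := by
    rcases hcases v with ⟨h, -⟩ | ⟨-, h | h⟩ <;> first | exact h | omega
  have hint (v : V) (hv : G.degree v = 2) : v ∈ int := by
    rcases hcases v with ⟨-, h⟩ | ⟨h, -⟩ <;> first | exact h | omega
  refine ⟨fun C ⟨v, hvC, hv⟩ => ?_, fun htwo => ?_⟩
  · rcases exists_degree_eq_one_pair_or_degree_eq_two hmax C ⟨v, hvC, hv⟩ with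
      ⟨a, haC, b, hbC, hab, ha, hb⟩ | hcycle
    · exact Or.inl ⟨a, b, hab, hext a ha, hext b hb, haC, hbC, ha, hb⟩
    · exact Or.inr fun u hu => ⟨hint u (hcycle u hu), hcycle u hu⟩
  · obtain ⟨a, b, -, hab⟩ := Set.ncard_eq_two.mp htwo
    have hleaf (v : V) : v ∈ ext ∧ G.degree v = 1 ↔ v = a ∨ v = b := by
      simpa using Set.ext_iff.mp hab v
    obtain ⟨ha_ext, ha⟩ := (hleaf a).mpr (Or.inl rfl)
    obtain ⟨c, hc_mem, hca, hc⟩ := exists_ne_degree_eq_one hmax connectedComponentMk_mem ha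
    have hcb : c = b := ((hleaf c).mp ⟨hext c hc, hc⟩).resolve_left hca
    refine ⟨G.connectedComponentMk a, ⟨a, ha_ext, ha, rfl⟩, ?_⟩
    rintro C ⟨v, hv_ext, hv, rfl⟩
    rcases (hleaf v).mp ⟨hv_ext, hv⟩ with rfl | rfl
    · rfl
    · exact hcb ▸ hc_mem

/-- abstract form of the decomposition of a synchronizing amoeboid into
chains. Consider the graph of active synchronizing edges of a structured amoeboid: a
finite simple graph on nodes partitioned into external (`ext`) and internal (`int`)
nodes, where external nodes touch at most one active edge and internal nodes touch
either zero or exactly two active edges. Then every connected component containing an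
active edge either is a chain with (two distinct) endpoints at external nodes, or
consists entirely of internal nodes (a cycle of internal nodes, all of degree 2);
moreover, if the transition exposes non-ε actions on exactly two external nodes (i.e.
exactly two external nodes are active), there is exactly one component of the first
kind. -/
theorem amoeboid_synchronization_decomposition {V : Type*} [Fintype V] [DecidableEq V]
    (G : SimpleGraph V) [DecidableRel G.Adj]
    (ext int : Set V)
    (hpart : ∀ v, v ∈ ext ↔ v ∉ int)
    (hdeg_ext : ∀ v ∈ ext, G.degree v ≤ 1)
    (hdeg_int : ∀ v ∈ int, G.degree v = 0 ∨ G.degree v = 2) :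
    (∀ C : G.ConnectedComponent,
      (∃ v, G.connectedComponentMk v = C ∧ 0 < G.degree v) →
        ((∃ v w, v ≠ w ∧ v ∈ ext ∧ w ∈ ext ∧
            G.connectedComponentMk v = C ∧ G.connectedComponentMk w = C ∧
            G.degree v = 1 ∧ G.degree w = 1) ∨
         (∀ v, G.connectedComponentMk v = C → v ∈ int ∧ G.degree v = 2))) ∧
    ((ext ∩ {v | G.degree v = 1}).ncard = 2 →
      ∃! C : G.ConnectedComponent,
        ∃ v, v ∈ ext ∧ G.degree v = 1 ∧ G.connectedComponentMk v = C) :=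
  amoeboid_synchronization_decomposition_general G ext int hpart hdeg_ext hdeg_int
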